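/- arXiv:2303.08570 — 2 statements merged into one kernel-verified Lean document; each statement's English description precedes it below -/
import Mathlib

section
/- Let A satisfy the Carathéodory, coercivity, growth, and monotonicity assumptions (A1)–(A3) with an N-function M, and suppose ξ : Ω → ℝ^d is measurable with ‖A(·, ξ(·)) · ξ(·)‖_{L¹(Ω)} ≤ c̃. Then there is a constant C, depending only on the structural constants c₁^A,…,c₄^A, ‖h₁‖_{L¹}, ‖h₂‖_{L¹}, and c̃, such that ‖A(·, ξ(·))‖_{L_{M*}(Ω)} ≤ C. -/
open MeasureTheory Filter Topology ENNReal NNReal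

noncomputable section

def IsYoung (m : ℝ → ℝ) : Prop :=
  ConvexOn ℝ (Set.Ici 0) m ∧ (∀ s : ℝ, 0 ≤ s → 0 ≤ m s) ∧
  (∀ s : ℝ, 0 ≤ s → (m s = 0 ↔ s = 0)) ∧
  Tendsto (fun s => m s / s) (𝓝[>] 0) (𝓝 0) ∧
  Tendsto (fun s => m s / s) atTop atTop

def IsNFunction {d : ℕ} (Ω : Set (EuclideanSpace ℝ (Fin d)))
    (M : EuclideanSpace ℝ (Fin d) → EuclideanSpace ℝ (Fin d) → ℝ) : Prop :=
  (∀ ξ, Measurable fun x => M x ξ) ∧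
  (∀ x ∈ Ω, ConvexOn ℝ Set.univ (M x)) ∧
  (∀ x ∈ Ω, M x 0 = 0) ∧
  (∀ x ∈ Ω, ∀ ξ, M x (-ξ) = M x ξ) ∧
  (∃ m₁ m₂ : ℝ → ℝ, IsYoung m₁ ∧ IsYoung m₂ ∧
    ∀ x ∈ Ω, ∀ ξ, m₁ ‖ξ‖ ≤ M x ξ ∧ M x ξ ≤ m₂ ‖ξ‖)

def modular {d : ℕ} (Ω : Set (EuclideanSpace ℝ (Fin d)))
    (M : EuclideanSpace ℝ (Fin d) → EuclideanSpace ℝ (Fin d) → ℝ)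
    (ξ : EuclideanSpace ℝ (Fin d) → EuclideanSpace ℝ (Fin d)) : ℝ≥0∞ :=
  ∫⁻ x in Ω, ENNReal.ofReal (M x (ξ x))

def luxNorm {d : ℕ} (Ω : Set (EuclideanSpace ℝ (Fin d)))
    (M : EuclideanSpace ℝ (Fin d) → EuclideanSpace ℝ (Fin d) → ℝ)
    (ξ : EuclideanSpace ℝ (Fin d) → EuclideanSpace ℝ (Fin d)) : ℝ :=
  sInf {l : ℝ | 0 < l ∧ modular Ω M (fun x => l⁻¹ • ξ x) ≤ 1}

def MemLM {d : ℕ} (Ω : Set (EuclideanSpace ℝ (Fin d)))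
    (M : EuclideanSpace ℝ (Fin d) → EuclideanSpace ℝ (Fin d) → ℝ)
    (ξ : EuclideanSpace ℝ (Fin d) → EuclideanSpace ℝ (Fin d)) : Prop :=
  AEMeasurable ξ (volume.restrict Ω) ∧
    ∃ l : ℝ, 0 < l ∧ modular Ω M (fun x => l⁻¹ • ξ x) < ⊤

set_option maxHeartbeats 2000000 in
/-- **Uniform `L_{M*}` bound on `A(·, ξ)`.** Fix structural constants `c₁,…,c₄`, bounds `H₁, H₂`
on `‖h₁‖_{L¹}, ‖h₂‖_{L¹}`, and `c̃`. Then there is a constant `C`, depending only on these data,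
such that for every vector field `A` satisfying (A1)–(A3) with an `N`-function `M` (with
conjugate `M*`) and every measurable `ξ` with `‖A(·,ξ)·ξ‖_{L¹(Ω)} ≤ c̃`, one has
`‖A(·,ξ)‖_{L_{M*}(Ω)} ≤ C`. -/
theorem luxNorm_A_bound (c₁ c₂ c₃ c₄ ctilde H₁ H₂ : ℝ)
    (hc₁ : 0 < c₁) (hc₂ : 0 < c₂) (hc₃ : 0 < c₃) (hc₄ : 0 < c₄)
    (hct : 0 ≤ ctilde) (hH₁ : 0 ≤ H₁) (hH₂ : 0 ≤ H₂) :
    ∃ C : ℝ, ∀ (d : ℕ) (Ω : Set (EuclideanSpace ℝ (Fin d))), MeasurableSet Ω →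
      ∀ (M Mstar : EuclideanSpace ℝ (Fin d) → EuclideanSpace ℝ (Fin d) → ℝ),
      IsNFunction Ω M →
      (∀ x ∈ Ω, ∀ η, Mstar x η
          = ⨆ ζ : EuclideanSpace ℝ (Fin d), ((inner ℝ ζ η : ℝ) - M x ζ)) →
      ∀ (A : EuclideanSpace ℝ (Fin d) → EuclideanSpace ℝ (Fin d) → EuclideanSpace ℝ (Fin d)),
      -- (A1) Carathéodory
      (∀ η, Measurable fun x => A x η) → (∀ x ∈ Ω, Continuous (A x)) →
      -- (A2)
      ∀ (h₁ h₂ : EuclideanSpace ℝ (Fin d) → ℝ),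
      IntegrableOn h₁ Ω → IntegrableOn h₂ Ω →
      (∫ x in Ω, |h₁ x|) ≤ H₁ → (∫ x in Ω, |h₂ x|) ≤ H₂ →
      (∀ x ∈ Ω, A x 0 = 0) →
      (∀ x ∈ Ω, ∀ η, M x (c₁ • η) - h₁ x ≤ (inner ℝ (A x η) η : ℝ)) →
      (∀ x ∈ Ω, ∀ η, c₂ * Mstar x (c₃ • A x η) ≤ M x (c₄ • η) + h₂ x) →
      -- (A3)
      (∀ x ∈ Ω, ∀ η ζ, 0 ≤ (inner ℝ (A x η - A x ζ) (η - ζ) : ℝ)) →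
      ∀ ξ : EuclideanSpace ℝ (Fin d) → EuclideanSpace ℝ (Fin d),
      AEMeasurable ξ (volume.restrict Ω) →
      (∫⁻ x in Ω, ENNReal.ofReal |(inner ℝ (A x (ξ x)) (ξ x) : ℝ)|) ≤ ENNReal.ofReal ctilde →
      luxNorm Ω Mstar (fun x => A x (ξ x)) ≤ C := by
  classical
  set c₅ : ℝ := max c₁ c₄ with hc₅def
  have hc₅ : 0 < c₅ := lt_max_of_lt_left hc₁
  set K₁ : ℝ := c₅ * (1 + 1 / (c₁ * c₃)) with hK₁def
  set K₂ : ℝ := c₅ / (c₁ * c₃) with hK₂def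
  set K₃ : ℝ := 2 * c₅ / (c₁ * c₂ * c₃) with hK₃def
  set B : ℝ := c₅ * (1 / (c₁ * c₃) + 2 / (c₁ * c₂ * c₃)) with hBdef
  set K₀ : ℝ := K₁ * ctilde + K₂ * H₁ + K₃ * H₂ with hK₀def
  have hK₁pos : 0 ≤ K₁ := by positivity
  have hK₂pos : 0 ≤ K₂ := by positivity
  have hK₃pos : 0 ≤ K₃ := by positivity
  have hBpos : 0 ≤ B := by positivity
  have hK₀pos : 0 ≤ K₀ := by positivity
  set s : ℝ := max K₀ 1 with hsdef
  set b : ℝ := max B 1 with hbdef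
  have hs1 : (1:ℝ) ≤ s := le_max_right _ _
  have hb1 : (1:ℝ) ≤ b := le_max_right _ _
  have hs : 0 < s := lt_of_lt_of_le one_pos hs1
  have hb : 0 < b := lt_of_lt_of_le one_pos hb1
  have hbs : 0 < b * s := mul_pos hb hs
  refine ⟨b * s, ?_⟩
  intro d Ω hΩ M Mstar hM hMstar A hA1 hA1' h₁ h₂ hh₁ hh₂ hH1int hH2int hA0 hcoer hgrow hmono ξ hξ hbound
  obtain ⟨hMmeas, hMconv, hMzero, hMeven, m₁, m₂, hy₁, hy₂, hmb⟩ := hM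
  -- nonnegativity of M
  have hMnn : ∀ x ∈ Ω, ∀ z, 0 ≤ M x z := fun x hx z =>
    le_trans (hy₁.2.1 _ (norm_nonneg z)) (hmb x hx z).1
  -- convex scaling
  have hscale : ∀ x ∈ Ω, ∀ t : ℝ, 0 ≤ t → t ≤ 1 → ∀ z, M x (t • z) ≤ t * M x z := by
    intro x hx t ht ht1 z
    have h := (hMconv x hx).2 (Set.mem_univ z) (Set.mem_univ (0 : EuclideanSpace ℝ (Fin d)))
      (show (0:ℝ) ≤ t from ht) (show (0:ℝ) ≤ 1 - t by linarith) (show t + (1 - t) = 1 by ring)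
    simpa [smul_zero, hMzero x hx] using h
  -- boundedness of the Fenchel sup
  have hbdd : ∀ x ∈ Ω, ∀ η, BddAbove (Set.range fun z : EuclideanSpace ℝ (Fin d) =>
      (inner ℝ z η : ℝ) - M x z) := by
    intro x hx η
    obtain ⟨R, hR⟩ := (hy₁.2.2.2.2.eventually_ge_atTop (‖η‖ + 1)).exists_forall_of_atTop
    refine ⟨max R 1 * ‖η‖, ?_⟩
    rintro _ ⟨z, rfl⟩
    show (inner ℝ z η : ℝ) - M x z ≤ max R 1 * ‖η‖
    have hinner : (inner ℝ z η : ℝ) ≤ ‖z‖ * ‖η‖ := real_inner_le_norm z η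
    have hMlb : m₁ ‖z‖ ≤ M x z := (hmb x hx z).1
    by_cases hz : ‖z‖ ≤ max R 1
    · have hm0 : 0 ≤ m₁ ‖z‖ := hy₁.2.1 _ (norm_nonneg z)
      have : ‖z‖ * ‖η‖ ≤ max R 1 * ‖η‖ := mul_le_mul_of_nonneg_right hz (norm_nonneg η)
      linarith
    · push_neg at hz
      have hz1 : (1:ℝ) ≤ ‖z‖ := le_of_lt (lt_of_le_of_lt (le_max_right R 1) hz)
      have hz0 : (0:ℝ) < ‖z‖ := lt_of_lt_of_le one_pos hz1
      have hRz : ‖η‖ + 1 ≤ m₁ ‖z‖ / ‖z‖ := hR ‖z‖ (le_of_lt (lt_of_le_of_lt (le_max_left R 1) hz))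
      have hm : (‖η‖ + 1) * ‖z‖ ≤ m₁ ‖z‖ := (le_div_iff₀ hz0).1 hRz
      have hmax : (0:ℝ) ≤ max R 1 * ‖η‖ := by positivity
      nlinarith [norm_nonneg η]
  -- Fenchel–Young
  have hFY : ∀ x ∈ Ω, ∀ η z, (inner ℝ z η : ℝ) - M x z ≤ Mstar x η := by
    intro x hx η z
    rw [hMstar x hx]
    exact le_ciSup (hbdd x hx η) z
  -- the key pointwise estimate
  have key : ∀ x ∈ Ω, ∀ ζ, (inner ℝ (A x (ξ x)) ζ : ℝ) ≤
      (K₁ * |(inner ℝ (A x (ξ x)) (ξ x) : ℝ)| + K₂ * |h₁ x| + K₃ * |h₂ x|) + B * M x ζ := by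
    intro x hx ζ
    set η : EuclideanSpace ℝ (Fin d) := c₅⁻¹ • ζ with hηdef
    have hζ : ζ = c₅ • η := by
      rw [hηdef, smul_smul, mul_inv_cancel₀ hc₅.ne', one_smul]
    set g : ℝ := |(inner ℝ (A x (ξ x)) (ξ x) : ℝ)| with hgdef
    have hg : (inner ℝ (A x (ξ x)) (ξ x) : ℝ) ≤ g := le_abs_self _
    have hgnn : 0 ≤ g := abs_nonneg _
    -- growth
    have hG : Mstar x (c₃ • A x η) ≤ (M x (c₄ • η) + |h₂ x|) / c₂ := by
      rw [le_div_iff₀ hc₂]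
      have h1 := hgrow x hx η
      have h2 := le_abs_self (h₂ x)
      linarith
    -- monotonicity
    have hmon : (inner ℝ (A x (ξ x)) η : ℝ) ≤
        inner ℝ (A x (ξ x)) (ξ x) - inner ℝ (A x η) (ξ x) + inner ℝ (A x η) η := by
      have h0 := hmono x hx (ξ x) η
      simp only [inner_sub_left, inner_sub_right] at h0
      linarith
    -- Fenchel-Young bound on -(A η)·ξ
    have hstep2 : -(inner ℝ (A x η) (ξ x) : ℝ) ≤
        (g + |h₁ x| + (M x (c₄ • η) + |h₂ x|) / c₂) / (c₁ * c₃) := by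
      have h1 := hFY x hx (c₃ • A x η) ((-c₁) • ξ x)
      have e1 : (inner ℝ ((-c₁) • ξ x) (c₃ • A x η) : ℝ) = -(c₁ * c₃) * inner ℝ (A x η) (ξ x) := by
        rw [real_inner_smul_left, real_inner_smul_right, real_inner_comm]
        ring
      have hMe : M x ((-c₁) • ξ x) = M x (c₁ • ξ x) := by
        rw [neg_smul]; exact hMeven x hx _
      have hcoe : M x (c₁ • ξ x) ≤ g + |h₁ x| := by
        have h2 := hcoer x hx (ξ x)
        have h3 := le_abs_self (h₁ x)
        linarith
      rw [le_div_iff₀ (by positivity : (0:ℝ) < c₁ * c₃)]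
      rw [e1, hMe] at h1
      linarith
    -- Fenchel-Young bound on (A η)·η
    have hstep3 : (inner ℝ (A x η) η : ℝ) ≤
        (M x (c₁ • η) + (M x (c₄ • η) + |h₂ x|) / c₂) / (c₁ * c₃) := by
      have h1 := hFY x hx (c₃ • A x η) (c₁ • η)
      have e1 : (inner ℝ (c₁ • η) (c₃ • A x η) : ℝ) = (c₁ * c₃) * inner ℝ (A x η) η := by
        rw [real_inner_smul_left, real_inner_smul_right, real_inner_comm]
        ring
      rw [le_div_iff₀ (by positivity : (0:ℝ) < c₁ * c₃)]
      rw [e1] at h1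
      linarith
    -- scaling bounds
    have hM4 : M x (c₄ • η) ≤ M x ζ := by
      have e : c₄ • η = (c₄ / c₅) • ζ := by
        rw [hηdef, smul_smul, div_eq_mul_inv]
      rw [e]
      have ht : c₄ / c₅ ≤ 1 := div_le_one_of_le₀ (le_max_right _ _) hc₅.le
      have ht0 : 0 ≤ c₄ / c₅ := by positivity
      calc M x ((c₄ / c₅) • ζ) ≤ (c₄ / c₅) * M x ζ := hscale x hx _ ht0 ht ζ
        _ ≤ 1 * M x ζ := mul_le_mul_of_nonneg_right ht (hMnn x hx ζ)
        _ = M x ζ := one_mul _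
    have hM1 : M x (c₁ • η) ≤ M x ζ := by
      have e : c₁ • η = (c₁ / c₅) • ζ := by
        rw [hηdef, smul_smul, div_eq_mul_inv]
      rw [e]
      have ht : c₁ / c₅ ≤ 1 := div_le_one_of_le₀ (le_max_left _ _) hc₅.le
      have ht0 : 0 ≤ c₁ / c₅ := by positivity
      calc M x ((c₁ / c₅) • ζ) ≤ (c₁ / c₅) * M x ζ := hscale x hx _ ht0 ht ζ
        _ ≤ 1 * M x ζ := mul_le_mul_of_nonneg_right ht (hMnn x hx ζ)
        _ = M x ζ := one_mul _
    -- combine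
    have hcomb : (inner ℝ (A x (ξ x)) η : ℝ) ≤
        g + (g + |h₁ x| + (M x ζ + |h₂ x|) / c₂) / (c₁ * c₃)
          + (M x ζ + (M x ζ + |h₂ x|) / c₂) / (c₁ * c₃) := by
      have e2 : (g + |h₁ x| + (M x (c₄ • η) + |h₂ x|) / c₂) / (c₁ * c₃) ≤
          (g + |h₁ x| + (M x ζ + |h₂ x|) / c₂) / (c₁ * c₃) := by
        gcongr
      have e3 : (M x (c₁ • η) + (M x (c₄ • η) + |h₂ x|) / c₂) / (c₁ * c₃) ≤
          (M x ζ + (M x ζ + |h₂ x|) / c₂) / (c₁ * c₃) := by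
        gcongr
      linarith
    have e4 : (inner ℝ (A x (ξ x)) ζ : ℝ) = c₅ * inner ℝ (A x (ξ x)) η := by
      conv_lhs => rw [hζ]
      rw [real_inner_smul_right]
    rw [e4]
    have e5 : c₅ * (g + (g + |h₁ x| + (M x ζ + |h₂ x|) / c₂) / (c₁ * c₃)
          + (M x ζ + (M x ζ + |h₂ x|) / c₂) / (c₁ * c₃)) =
        (K₁ * g + K₂ * |h₁ x| + K₃ * |h₂ x|) + B * M x ζ := by
      rw [hK₁def, hK₂def, hK₃def, hBdef]
      field_simp
      ring
    calc c₅ * (inner ℝ (A x (ξ x)) η : ℝ) ≤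
        c₅ * (g + (g + |h₁ x| + (M x ζ + |h₂ x|) / c₂) / (c₁ * c₃)
          + (M x ζ + (M x ζ + |h₂ x|) / c₂) / (c₁ * c₃)) :=
        mul_le_mul_of_nonneg_left hcomb hc₅.le
      _ = (K₁ * g + K₂ * |h₁ x| + K₃ * |h₂ x|) + B * M x ζ := e5
  -- pointwise bound on the conjugate modular integrand
  have hpt : ∀ x ∈ Ω, Mstar x ((b * s)⁻¹ • A x (ξ x)) ≤
      s⁻¹ * (K₁ * |(inner ℝ (A x (ξ x)) (ξ x) : ℝ)| + K₂ * |h₁ x| + K₃ * |h₂ x|) := by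
    intro x hx
    have hgen : ∀ a₀ : ℝ, 0 ≤ a₀ →
        (∀ z, (inner ℝ (A x (ξ x)) z : ℝ) ≤ a₀ + B * M x z) →
        ∀ z, (inner ℝ z ((b * s)⁻¹ • A x (ξ x)) : ℝ) - M x z ≤ s⁻¹ * a₀ := by
      intro a₀ ha₀nn hk z
      have hMz := hMnn x hx z
      have e2 : (inner ℝ z ((b * s)⁻¹ • A x (ξ x)) : ℝ) = (b * s)⁻¹ * inner ℝ (A x (ξ x)) z := by
        rw [real_inner_smul_right, real_inner_comm]
      rw [e2]
      have h1 : (b * s)⁻¹ * (inner ℝ (A x (ξ x)) z : ℝ) ≤ (b * s)⁻¹ * (a₀ + B * M x z) :=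
        mul_le_mul_of_nonneg_left (hk z) (inv_nonneg.2 hbs.le)
      rw [mul_add] at h1
      have h2 : (b * s)⁻¹ * a₀ ≤ s⁻¹ * a₀ := by
        apply mul_le_mul_of_nonneg_right _ ha₀nn
        apply inv_anti₀ hs
        nlinarith
      have h3 : (b * s)⁻¹ * (B * M x z) ≤ M x z := by
        have hBle : B ≤ b * s := by nlinarith [le_max_left B 1]
        have hle1 : (b * s)⁻¹ * B ≤ 1 := by
          rw [inv_mul_le_iff₀ hbs]; linarith
        calc (b * s)⁻¹ * (B * M x z) = ((b * s)⁻¹ * B) * M x z := by ring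
          _ ≤ 1 * M x z := mul_le_mul_of_nonneg_right hle1 hMz
          _ = M x z := one_mul _
      linarith
    rw [hMstar x hx]
    exact ciSup_le (hgen _ (by positivity) (key x hx))
  -- modular bound
  have hmod : modular Ω Mstar (fun x => (b * s)⁻¹ • A x (ξ x)) ≤ 1 := by
    have step1 : modular Ω Mstar (fun x => (b * s)⁻¹ • A x (ξ x)) ≤
        ∫⁻ x in Ω, ENNReal.ofReal (s⁻¹ * (K₁ * |(inner ℝ (A x (ξ x)) (ξ x) : ℝ)|
          + K₂ * |h₁ x| + K₃ * |h₂ x|)) := by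
      apply lintegral_mono_ae
      filter_upwards [ae_restrict_mem hΩ] with x hx
      exact ENNReal.ofReal_le_ofReal (hpt x hx)
    refine le_trans step1 ?_
    have hsinv : (0:ℝ) ≤ s⁻¹ := inv_nonneg.2 hs.le
    have e : ∀ x, ENNReal.ofReal (s⁻¹ * (K₁ * |(inner ℝ (A x (ξ x)) (ξ x) : ℝ)|
          + K₂ * |h₁ x| + K₃ * |h₂ x|)) =
        ENNReal.ofReal s⁻¹ * (ENNReal.ofReal (K₁ * |(inner ℝ (A x (ξ x)) (ξ x) : ℝ)|)
          + (ENNReal.ofReal (K₂ * |h₁ x|) + ENNReal.ofReal (K₃ * |h₂ x|))) := by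
      intro x
      rw [ENNReal.ofReal_mul hsinv, ← ENNReal.ofReal_add (by positivity) (by positivity),
        ← ENNReal.ofReal_add (by positivity) (by positivity)]
      ring_nf
    simp_rw [e]
    rw [lintegral_const_mul' _ _ ENNReal.ofReal_ne_top]
    have hGH : AEMeasurable (fun x => ENNReal.ofReal (K₂ * |h₁ x|) + ENNReal.ofReal (K₃ * |h₂ x|))
        (volume.restrict Ω) := by
      exact ((hh₁.abs.aemeasurable.const_mul K₂).ennreal_ofReal).add
        ((hh₂.abs.aemeasurable.const_mul K₃).ennreal_ofReal)
    rw [lintegral_add_right' _ hGH]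
    rw [lintegral_add_left' ((hh₁.abs.aemeasurable.const_mul K₂).ennreal_ofReal)]
    have bF : (∫⁻ x in Ω, ENNReal.ofReal (K₁ * |(inner ℝ (A x (ξ x)) (ξ x) : ℝ)|)) ≤
        ENNReal.ofReal K₁ * ENNReal.ofReal ctilde := by
      have : ∀ x, ENNReal.ofReal (K₁ * |(inner ℝ (A x (ξ x)) (ξ x) : ℝ)|) =
          ENNReal.ofReal K₁ * ENNReal.ofReal |(inner ℝ (A x (ξ x)) (ξ x) : ℝ)| := fun x =>
        ENNReal.ofReal_mul hK₁pos
      simp_rw [this]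
      rw [lintegral_const_mul' _ _ ENNReal.ofReal_ne_top]
      exact mul_le_mul_right hbound _
    have bG : (∫⁻ x in Ω, ENNReal.ofReal (K₂ * |h₁ x|)) ≤
        ENNReal.ofReal K₂ * ENNReal.ofReal H₁ := by
      have e1 : ∀ x, ENNReal.ofReal (K₂ * |h₁ x|) =
          ENNReal.ofReal K₂ * ENNReal.ofReal |h₁ x| := fun x => ENNReal.ofReal_mul hK₂pos
      simp_rw [e1]
      rw [lintegral_const_mul' _ _ ENNReal.ofReal_ne_top]
      apply mul_le_mul_right
      rw [← ofReal_integral_eq_lintegral_ofReal hh₁.abs (Filter.Eventually.of_forall fun x => abs_nonneg _)]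
      exact ENNReal.ofReal_le_ofReal hH1int
    have bH : (∫⁻ x in Ω, ENNReal.ofReal (K₃ * |h₂ x|)) ≤
        ENNReal.ofReal K₃ * ENNReal.ofReal H₂ := by
      have e1 : ∀ x, ENNReal.ofReal (K₃ * |h₂ x|) =
          ENNReal.ofReal K₃ * ENNReal.ofReal |h₂ x| := fun x => ENNReal.ofReal_mul hK₃pos
      simp_rw [e1]
      rw [lintegral_const_mul' _ _ ENNReal.ofReal_ne_top]
      apply mul_le_mul_right
      rw [← ofReal_integral_eq_lintegral_ofReal hh₂.abs (Filter.Eventually.of_forall fun x => abs_nonneg _)]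
      exact ENNReal.ofReal_le_ofReal hH2int
    have hsum : ENNReal.ofReal K₁ * ENNReal.ofReal ctilde +
        (ENNReal.ofReal K₂ * ENNReal.ofReal H₁ + ENNReal.ofReal K₃ * ENNReal.ofReal H₂) =
        ENNReal.ofReal K₀ := by
      rw [← ENNReal.ofReal_mul hK₁pos, ← ENNReal.ofReal_mul hK₂pos, ← ENNReal.ofReal_mul hK₃pos,
        ← ENNReal.ofReal_add (by positivity) (by positivity),
        ← ENNReal.ofReal_add (by positivity) (by positivity), hK₀def]
      ring_nf
    calc ENNReal.ofReal s⁻¹ *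
          ((∫⁻ x in Ω, ENNReal.ofReal (K₁ * |(inner ℝ (A x (ξ x)) (ξ x) : ℝ)|)) +
            ((∫⁻ x in Ω, ENNReal.ofReal (K₂ * |h₁ x|)) +
              (∫⁻ x in Ω, ENNReal.ofReal (K₃ * |h₂ x|)))) ≤
        ENNReal.ofReal s⁻¹ * (ENNReal.ofReal K₁ * ENNReal.ofReal ctilde +
          (ENNReal.ofReal K₂ * ENNReal.ofReal H₁ + ENNReal.ofReal K₃ * ENNReal.ofReal H₂)) := by
          exact mul_le_mul_right (add_le_add bF (add_le_add bG bH)) _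
      _ = ENNReal.ofReal (s⁻¹ * K₀) := by rw [hsum, ← ENNReal.ofReal_mul hsinv]
      _ ≤ 1 := by
          rw [← ENNReal.ofReal_one]
          apply ENNReal.ofReal_le_ofReal
          have : s⁻¹ * K₀ ≤ s⁻¹ * s :=
            mul_le_mul_of_nonneg_left (le_max_left _ _) hsinv
          rw [inv_mul_cancel₀ hs.ne'] at this
          exact this
  -- conclude via the infimum
  have hmem : b * s ∈ {l : ℝ | 0 < l ∧
      modular Ω Mstar (fun x => l⁻¹ • A x (ξ x)) ≤ 1} := ⟨hbs, hmod⟩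
  exact csInf_le ⟨0, fun y hy => hy.1.le⟩ hmem
end
end

section
/- Let Ω have finite measure, b : Ω × ℝ → ℝ be Carathéodory, nondecreasing in s, with b(·,s) ∈ L¹(Ω) for each s and b(x,s)·sign(s) ≥ 0. Suppose u_n → u a.e. in Ω and sup_n ∫_Ω b(x,u_n(x)) u_n(x) dx ≤ C < ∞. Then b(·, u_n) → b(·, u) strongly in L¹(Ω). -/
open MeasureTheory Filter Topology ENNReal NNReal

section Aux

variable {α : Type*} [MeasurableSpace α]

/-- Composing a function measurable in the first variable with a simple function is measurable. -/
lemma measurable_comp_simpleFunc (b : α → ℝ → ℝ) (hbmeas : ∀ s : ℝ, Measurable fun x => b x s)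
    (ψ : SimpleFunc α ℝ) : Measurable fun x => b x (ψ x) := by
  have heq : (fun x => b x (ψ x)) =
      fun x => ∑ c ∈ ψ.range, Set.indicator (ψ ⁻¹' {c}) (fun y => b y c) x := by
    funext x
    rw [Finset.sum_eq_single (ψ x)]
    · exact (Set.indicator_of_mem rfl _).symm
    · intro c _ hc
      have hxn : x ∉ ψ ⁻¹' {c} := fun h => hc (Set.mem_singleton_iff.mp h).symm
      exact Set.indicator_of_notMem hxn _
    · intro h
      exact absurd (ψ.mem_range_self x) h
  rw [heq]
  exact Finset.measurable_sum _ fun c _ =>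
    ((hbmeas c).indicator (ψ.measurableSet_preimage {c}))

/-- A Carathéodory composition `x ↦ b x (v x)` is a.e. strongly measurable on `Ω`. -/
lemma aestronglyMeasurable_comp {Ω : Set α} (hΩ : MeasurableSet Ω) {μ : Measure α}
    (b : α → ℝ → ℝ) (hbmeas : ∀ s : ℝ, Measurable fun x => b x s)
    (hbcont : ∀ x ∈ Ω, Continuous (b x)) {v : α → ℝ} (hv : Measurable v) :
    AEStronglyMeasurable (fun x => b x (v x)) (μ.restrict Ω) := by
  have hsm : StronglyMeasurable v := hv.stronglyMeasurable
  have hmeas : ∀ k : ℕ, Measurable fun x => b x (hsm.approx k x) := fun k =>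
    measurable_comp_simpleFunc b hbmeas (hsm.approx k)
  have htend : ∀ᵐ x ∂(μ.restrict Ω),
      Tendsto (fun k => b x (hsm.approx k x)) atTop (𝓝 (b x (v x))) := by
    filter_upwards [ae_restrict_mem hΩ] with x hx
    exact ((hbcont x hx).tendsto (v x)).comp (hsm.tendsto_approx x)
  exact (aemeasurable_of_tendsto_metrizable_ae atTop
    (fun k => (hmeas k).aemeasurable) htend).aestronglyMeasurable

end Aux

/-- **Strong `L¹` convergence of the lower-order term.** If `Ω` has finite measure, `b` is a
Carathéodory function, nondecreasing in the second variable, with `b(·,s) ∈ L¹(Ω)` for each `s`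
and the sign condition `b(x,s)·sign(s) ≥ 0`, and if `u_n → u` a.e. in `Ω` with
`sup_n ∫_Ω b(x,u_n) u_n dx ≤ C < ∞`, then `b(·,u_n) → b(·,u)` strongly in `L¹(Ω)`. -/
theorem lower_order_term_L1_convergence {d : ℕ}
    (Ω : Set (EuclideanSpace ℝ (Fin d))) (hΩ : MeasurableSet Ω)
    (hΩfin : volume Ω < ⊤)
    (b : EuclideanSpace ℝ (Fin d) → ℝ → ℝ)
    (hbmeas : ∀ s : ℝ, Measurable fun x => b x s)
    (hbcont : ∀ x ∈ Ω, Continuous (b x))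
    (hbmono : ∀ x ∈ Ω, Monotone (b x))
    (hbint : ∀ s : ℝ, IntegrableOn (fun x => b x s) Ω)
    (hbsign : ∀ x ∈ Ω, ∀ s : ℝ, 0 ≤ b x s * Real.sign s)
    (u : ℕ → EuclideanSpace ℝ (Fin d) → ℝ) (ulim : EuclideanSpace ℝ (Fin d) → ℝ)
    (humeas : ∀ n, Measurable (u n)) (hulimmeas : Measurable ulim)
    (hae : ∀ᵐ x ∂(volume.restrict Ω), Tendsto (fun n => u n x) atTop (𝓝 (ulim x)))
    (C : ℝ)
    (hC : ∀ n, (∫⁻ x in Ω, ENNReal.ofReal (b x (u n x) * u n x)) ≤ ENNReal.ofReal C) :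
    Tendsto (fun n => ∫ x in Ω, |b x (u n x) - b x (ulim x)|) atTop (𝓝 0) := by
  set μ : Measure (EuclideanSpace ℝ (Fin d)) := volume.restrict Ω with hμ
  haveI : IsFiniteMeasure μ := ⟨by rwa [hμ, Measure.restrict_apply_univ]⟩
  set f : ℕ → EuclideanSpace ℝ (Fin d) → ℝ := fun n x => b x (u n x) with hf
  set g : EuclideanSpace ℝ (Fin d) → ℝ := fun x => b x (ulim x) with hg
  -- measurability
  have hfmeas : ∀ n, AEStronglyMeasurable (f n) μ := fun n =>
    aestronglyMeasurable_comp hΩ b hbmeas hbcont (humeas n)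
  have hgmeas : AEStronglyMeasurable g μ :=
    aestronglyMeasurable_comp hΩ b hbmeas hbcont hulimmeas
  -- sign condition: `b x s * s ≥ 0`
  have hsign' : ∀ x ∈ Ω, ∀ s : ℝ, 0 ≤ b x s * s := by
    intro x hx s
    rcases lt_trichotomy s 0 with h | h | h
    · have h1 := hbsign x hx s
      rw [Real.sign_of_neg h] at h1
      have hb : b x s ≤ 0 := by nlinarith
      nlinarith
    · simp [h]
    · have h1 := hbsign x hx s
      rw [Real.sign_of_pos h] at h1
      nlinarith
  have hpos : ∀ x ∈ Ω, ∀ s : ℝ, 0 < s → 0 ≤ b x s := by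
    intro x hx s hs
    have h1 := hbsign x hx s
    rwa [Real.sign_of_pos hs, mul_one] at h1
  have hneg : ∀ x ∈ Ω, ∀ s : ℝ, s < 0 → b x s ≤ 0 := by
    intro x hx s hs
    have h1 := hbsign x hx s
    rw [Real.sign_of_neg hs] at h1
    nlinarith
  -- pointwise bound: |b x s| ≤ |b x ℓ| + |b x (-ℓ)| + b x s * s / ℓ for ℓ > 0
  have hptwise : ∀ (ℓ : ℝ), 0 < ℓ → ∀ x ∈ Ω, ∀ s : ℝ,
      |b x s| ≤ |b x ℓ| + |b x (-ℓ)| + b x s * s / ℓ := by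
    intro ℓ hℓ x hx s
    rcases le_or_gt ℓ s with h | h
    · -- s ≥ ℓ > 0 : b x s ≥ 0 and b x s ≤ b x s * s / ℓ
      have hb0 : 0 ≤ b x s := hpos x hx s (hℓ.trans_le h)
      have : b x s ≤ b x s * s / ℓ := by
        rw [le_div_iff₀ hℓ]
        exact mul_le_mul_of_nonneg_left h hb0
      have habs : |b x s| = b x s := abs_of_nonneg hb0
      have h1 : (0:ℝ) ≤ |b x ℓ| := abs_nonneg _
      have h2 : (0:ℝ) ≤ |b x (-ℓ)| := abs_nonneg _
      linarith
    rcases le_or_gt s (-ℓ) with h' | h'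
    · -- s ≤ -ℓ < 0 : b x s ≤ 0 and -b x s ≤ b x s * s / ℓ
      have hb0 : b x s ≤ 0 := hneg x hx s (h'.trans_lt (by linarith))
      have : -b x s ≤ b x s * s / ℓ := by
        rw [le_div_iff₀ hℓ]
        have : (-b x s) * ℓ ≤ (-b x s) * (-s) :=
          mul_le_mul_of_nonneg_left (by linarith) (by linarith)
        nlinarith
      have habs : |b x s| = -b x s := abs_of_nonpos hb0
      have h1 : (0:ℝ) ≤ |b x ℓ| := abs_nonneg _
      have h2 : (0:ℝ) ≤ |b x (-ℓ)| := abs_nonneg _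
      linarith
    · -- -ℓ < s < ℓ : monotonicity
      have hle : b x s ≤ b x ℓ := hbmono x hx h.le
      have hge : b x (-ℓ) ≤ b x s := hbmono x hx h'.le
      have h3 : 0 ≤ b x s * s / ℓ := div_nonneg (hsign' x hx s) hℓ.le
      have h1 : b x ℓ ≤ |b x ℓ| := le_abs_self _
      have h2 : -|b x (-ℓ)| ≤ b x (-ℓ) := neg_abs_le _
      have h4 : (0:ℝ) ≤ |b x ℓ| := abs_nonneg _
      have h5 : (0:ℝ) ≤ |b x (-ℓ)| := abs_nonneg _
      rw [abs_le]
      constructor <;> linarith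
  -- the dominating function for level ℓ
  have hHint : ∀ ℓ : ℝ, Integrable (fun x => |b x ℓ| + |b x (-ℓ)|) μ := fun ℓ =>
    (hbint ℓ).abs.add (hbint (-ℓ)).abs
  -- key lintegral bound
  have hbound : ∀ (ℓ : ℝ), 0 < ℓ → ∀ (v : EuclideanSpace ℝ (Fin d) → ℝ), Measurable v →
      (∫⁻ x, ENNReal.ofReal (b x (v x) * v x) ∂μ) ≤ ENNReal.ofReal C →
      ∀ s : Set (EuclideanSpace ℝ (Fin d)), MeasurableSet s →
      (∫⁻ x in s, ‖b x (v x)‖₊ ∂μ) ≤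
        (∫⁻ x in s, ‖|b x ℓ| + |b x (-ℓ)|‖₊ ∂μ) + ENNReal.ofReal C / ENNReal.ofReal ℓ := by
    intro ℓ hℓ v hv hCv s hs
    have hbv : AEMeasurable (fun x => ENNReal.ofReal (b x (v x) * v x)) μ :=
      ENNReal.measurable_ofReal.comp_aemeasurable
        ((aestronglyMeasurable_comp hΩ b hbmeas hbcont hv).aemeasurable.mul hv.aemeasurable)
    have hmono : (∫⁻ x in s, ‖b x (v x)‖₊ ∂μ) ≤
        ∫⁻ x in s, (‖|b x ℓ| + |b x (-ℓ)|‖₊ +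
          ENNReal.ofReal (b x (v x) * v x) / ENNReal.ofReal ℓ) ∂μ := by
      apply lintegral_mono_ae
      have hmem : ∀ᵐ x ∂(μ.restrict s), x ∈ Ω :=
        (ae_restrict_mem hΩ).filter_mono (ae_mono Measure.restrict_le_self)
      filter_upwards [hmem] with x hx
      have key := hptwise ℓ hℓ x hx (v x)
      have h1 : (‖b x (v x)‖₊ : ℝ≥0∞) = ENNReal.ofReal |b x (v x)| := by
        rw [← Real.norm_eq_abs, ofReal_norm, enorm_eq_nnnorm]
      have h2 : (‖|b x ℓ| + |b x (-ℓ)|‖₊ : ℝ≥0∞) = ENNReal.ofReal (|b x ℓ| + |b x (-ℓ)|) := by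
        rw [← enorm_eq_nnnorm, ← ofReal_norm, Real.norm_eq_abs,
          abs_of_nonneg (by positivity)]
      rw [h1, h2, ← ENNReal.ofReal_div_of_pos hℓ, ← ENNReal.ofReal_add (by positivity)
        (div_nonneg (hsign' x hx (v x)) hℓ.le)]
      exact ENNReal.ofReal_le_ofReal key
    refine hmono.trans ?_
    rw [lintegral_add_right']
    · gcongr
      calc (∫⁻ x in s, ENNReal.ofReal (b x (v x) * v x) / ENNReal.ofReal ℓ ∂μ)
          ≤ ∫⁻ x, ENNReal.ofReal (b x (v x) * v x) / ENNReal.ofReal ℓ ∂μ :=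
            setLIntegral_le_lintegral s _
        _ = (∫⁻ x, ENNReal.ofReal (b x (v x) * v x) ∂μ) / ENNReal.ofReal ℓ := by
            simp_rw [div_eq_mul_inv]
            exact lintegral_mul_const' _ _ (by simp [hℓ])
        _ ≤ ENNReal.ofReal C / ENNReal.ofReal ℓ := by gcongr
    · exact hbv.restrict.div_const _
  -- a.e. convergence of `f n` to `g`
  have haeconv : ∀ᵐ x ∂μ, Tendsto (fun n => f n x) atTop (𝓝 (g x)) := by
    filter_upwards [hae, ae_restrict_mem hΩ] with x hx hxΩ
    exact ((hbcont x hxΩ).tendsto (ulim x)).comp hx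
  -- Fatou: the limit also satisfies the energy bound
  have hCg : (∫⁻ x, ENNReal.ofReal (b x (ulim x) * ulim x) ∂μ) ≤ ENNReal.ofReal C := by
    have hmeasn : ∀ n, AEMeasurable (fun x => ENNReal.ofReal (b x (u n x) * u n x)) μ := fun n =>
      ENNReal.measurable_ofReal.comp_aemeasurable
        ((hfmeas n).aemeasurable.mul (humeas n).aemeasurable)
    have heqlim : ∀ᵐ x ∂μ, ENNReal.ofReal (b x (ulim x) * ulim x) =
        Filter.liminf (fun n => ENNReal.ofReal (b x (u n x) * u n x)) atTop := by
      filter_upwards [hae, ae_restrict_mem hΩ] with x hx hxΩ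
      have htend : Tendsto (fun n => ENNReal.ofReal (b x (u n x) * u n x)) atTop
          (𝓝 (ENNReal.ofReal (b x (ulim x) * ulim x))) :=
        (ENNReal.continuous_ofReal.tendsto _).comp
          ((((hbcont x hxΩ).tendsto (ulim x)).comp hx).mul hx)
      exact htend.liminf_eq.symm
    calc (∫⁻ x, ENNReal.ofReal (b x (ulim x) * ulim x) ∂μ)
        = ∫⁻ x, Filter.liminf (fun n => ENNReal.ofReal (b x (u n x) * u n x)) atTop ∂μ :=
          lintegral_congr_ae heqlim
      _ ≤ Filter.liminf (fun n => ∫⁻ x, ENNReal.ofReal (b x (u n x) * u n x) ∂μ) atTop :=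
          lintegral_liminf_le' hmeasn
      _ ≤ Filter.liminf (fun _ : ℕ => ENNReal.ofReal C) atTop :=
          liminf_le_liminf (Eventually.of_forall hC)
      _ = ENNReal.ofReal C := liminf_const _
  -- `g` is in `L¹`
  have hmemg : MemLp g 1 μ := by
    refine ⟨hgmeas, ?_⟩
    rw [eLpNorm_one_eq_lintegral_enorm]
    have hkey := hbound 1 one_pos ulim hulimmeas hCg Set.univ MeasurableSet.univ
    rw [Measure.restrict_univ] at hkey
    refine lt_of_le_of_lt hkey (ENNReal.add_lt_top.mpr ⟨?_, ?_⟩)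
    · exact (hHint 1).hasFiniteIntegral
    · exact ENNReal.div_lt_top ENNReal.ofReal_ne_top (by simp)
  -- uniform integrability
  have hui : UnifIntegrable f 1 μ := by
    intro ε hε
    set ℓ : ℝ := max 1 (2 * C / ε) with hℓdef
    have hℓpos : 0 < ℓ := lt_of_lt_of_le one_pos (le_max_left _ _)
    have hdivle : ENNReal.ofReal C / ENNReal.ofReal ℓ ≤ ENNReal.ofReal (ε / 2) := by
      rcases le_or_gt C 0 with h | h
      · simp [ENNReal.ofReal_eq_zero.2 h, ENNReal.zero_div]
      · rw [← ENNReal.ofReal_div_of_pos hℓpos]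
        apply ENNReal.ofReal_le_ofReal
        rw [div_le_iff₀ hℓpos]
        have h2 : 2 * C / ε ≤ ℓ := le_max_right _ _
        calc C = ε / 2 * (2 * C / ε) := by field_simp
          _ ≤ ε / 2 * ℓ := mul_le_mul_of_nonneg_left h2 (by positivity)
    obtain ⟨δ, hδpos, hδ⟩ := (memLp_one_iff_integrable.mpr (hHint ℓ)).eLpNorm_indicator_le
      le_rfl (by simp) (half_pos hε)
    refine ⟨δ, hδpos, fun n s hs hμs => ?_⟩
    have hkey := hbound ℓ hℓpos (u n) (humeas n) (hC n) s hs
    have h1 : eLpNorm (s.indicator (f n)) 1 μ = ∫⁻ x in s, ‖f n x‖₊ ∂μ := by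
      rw [eLpNorm_indicator_eq_eLpNorm_restrict hs, eLpNorm_one_eq_lintegral_enorm]; simp only [enorm_eq_nnnorm]
    have h2 : (∫⁻ x in s, ‖|b x ℓ| + |b x (-ℓ)|‖₊ ∂μ) =
        eLpNorm (s.indicator fun x => |b x ℓ| + |b x (-ℓ)|) 1 μ := by
      rw [eLpNorm_indicator_eq_eLpNorm_restrict hs, eLpNorm_one_eq_lintegral_enorm]; simp only [enorm_eq_nnnorm]
    calc eLpNorm (s.indicator (f n)) 1 μ = ∫⁻ x in s, ‖f n x‖₊ ∂μ := h1
      _ ≤ (∫⁻ x in s, ‖|b x ℓ| + |b x (-ℓ)|‖₊ ∂μ) + ENNReal.ofReal C / ENNReal.ofReal ℓ := hkey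
      _ ≤ ENNReal.ofReal (ε / 2) + ENNReal.ofReal (ε / 2) :=
          add_le_add (le_of_eq_of_le h2 (hδ s hs hμs)) hdivle
      _ = ENNReal.ofReal ε := by
          rw [← ENNReal.ofReal_add (by positivity) (by positivity)]
          norm_num
  -- Vitali convergence theorem
  have htim : TendstoInMeasure μ f atTop g := tendstoInMeasure_of_tendsto_ae hfmeas haeconv
  have hLp : Tendsto (fun n => eLpNorm (f n - g) 1 μ) atTop (𝓝 0) :=
    tendsto_Lp_finite_of_tendstoInMeasure le_rfl (by simp) hfmeas hmemg hui htim
  have heq : ∀ n, (∫ x, |b x (u n x) - b x (ulim x)| ∂μ) = (eLpNorm (f n - g) 1 μ).toReal := by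
    intro n
    rw [eLpNorm_one_eq_lintegral_enorm]
    calc (∫ x, |b x (u n x) - b x (ulim x)| ∂μ) = ∫ x, ‖(f n - g) x‖ ∂μ := by
          simp [Real.norm_eq_abs, hf, hg]
      _ = (∫⁻ x, ‖(f n - g) x‖₊ ∂μ).toReal :=
          integral_norm_eq_lintegral_enorm ((hfmeas n).sub hgmeas)
  have htR : Tendsto (fun n => (eLpNorm (f n - g) 1 μ).toReal) atTop (𝓝 0) := by
    have := (ENNReal.tendsto_toReal (by simp : (0 : ℝ≥0∞) ≠ ⊤)).comp hLp
    simpa [Function.comp_def] using this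
  exact htR.congr fun n => (heq n).symm
end
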